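/- arXiv:2102.00823 — 3 statements merged into one kernel-verified Lean document; each statement's English description precedes it below -/
import Mathlib

section
/- Let K be a field, let f, g ∈ K[x_1,…,x_n], and let G be a chordal structure of the set {f, g}. Suppose G has a perfect elimination ordering in which the variable x_k is greater than or equal to every variable occurring in f or in g. Then G is a chordal structure of the set {res(f, g, x_k)}. -/
open MvPolynomial

/-- The associated graph of a set of multivariate polynomials: vertices are variables,
with an edge between two distinct variables iff some polynomial contains both. -/
def assocGraph {σ R : Type*} [CommSemiring R] [DecidableEq σ]
    (F : Set (MvPolynomial σ R)) : SimpleGraph σ where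
  Adj i j := i ≠ j ∧ ∃ f ∈ F, i ∈ f.vars ∧ j ∈ f.vars
  symm := by
    constructor
    intro i j h
    exact ⟨h.1.symm, by obtain ⟨f, hf, hi, hj⟩ := h.2; exact ⟨f, hf, hj, hi⟩⟩
  loopless := by constructor; intro i h; exact h.1 rfl

/-- `lt` (a strict linear ordering of the vertices) is a perfect elimination ordering of `G`:
for every vertex `v`, the vertex `v` together with its earlier neighbours forms a clique. -/
def IsPEO {V : Type*} (G : SimpleGraph V) (lt : V → V → Prop) : Prop :=
  ∀ v : V, G.IsClique (insert v {u | lt u v ∧ G.Adj u v})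

/-- A graph is chordal if it admits a perfect elimination ordering. -/
def ChordalGraph {V : Type*} (G : SimpleGraph V) : Prop :=
  ∃ lt : V → V → Prop, IsStrictTotalOrder V lt ∧ IsPEO G lt

/-- `G` is a chordal structure of `F`: `G` is chordal and the associated graph of `F`
is a subgraph of `G`. -/
def ChordalStructure {σ R : Type*} [CommSemiring R] [DecidableEq σ]
    (G : SimpleGraph σ) (F : Set (MvPolynomial σ R)) : Prop :=
  ChordalGraph G ∧ assocGraph F ≤ G

/-- `f` regarded as a univariate polynomial in the variable `k`,
with coefficients in the polynomial ring in the remaining variables. -/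
noncomputable def toUnivar {σ R : Type*} [CommSemiring R] [DecidableEq σ] (k : σ)
    (f : MvPolynomial σ R) : Polynomial (MvPolynomial {j : σ // j ≠ k} R) :=
  optionEquivLeft R {j : σ // j ≠ k} (rename (Equiv.optionSubtypeNe k).symm f)

/-- The `i`-th coefficient of `f` regarded as a univariate polynomial in `k`,
viewed again as a polynomial in all the variables. -/
noncomputable def coeffWrt {σ R : Type*} [CommSemiring R] [DecidableEq σ] (k : σ)
    (f : MvPolynomial σ R) (i : ℕ) : MvPolynomial σ R :=
  rename Subtype.val ((toUnivar k f).coeff i)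

/-- The leading coefficient of `f` regarded as a univariate polynomial in `k`. -/
noncomputable def lcWrt {σ R : Type*} [CommSemiring R] [DecidableEq σ] (k : σ)
    (f : MvPolynomial σ R) : MvPolynomial σ R :=
  rename Subtype.val (toUnivar k f).leadingCoeff

/-- The Sylvester matrix of two univariate polynomials `p` and `q`:
the first `q.natDegree` rows are the shifted coefficient vectors of `p`,
the remaining `p.natDegree` rows are the shifted coefficient vectors of `q`. -/
noncomputable def sylvesterMatrix {R : Type*} [CommRing R] (p q : Polynomial R) :
    Matrix (Fin (q.natDegree + p.natDegree)) (Fin (q.natDegree + p.natDegree)) R :=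
  Matrix.of fun i j =>
    if (i : ℕ) < q.natDegree then
      (if (i : ℕ) ≤ (j : ℕ) ∧ (j : ℕ) ≤ (i : ℕ) + p.natDegree
        then p.coeff (p.natDegree - ((j : ℕ) - (i : ℕ))) else 0)
    else
      (if (i : ℕ) - q.natDegree ≤ (j : ℕ) ∧ (j : ℕ) ≤ ((i : ℕ) - q.natDegree) + q.natDegree
        then q.coeff (q.natDegree - ((j : ℕ) - ((i : ℕ) - q.natDegree))) else 0)

/-- The resultant of two univariate polynomials: the determinant of their Sylvester matrix. -/
noncomputable def resultant {R : Type*} [CommRing R] (p q : Polynomial R) : R :=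
  (sylvesterMatrix p q).det

/-- The resultant of `f` and `g` with respect to the variable `k`: the resultant of `f` and `g`
regarded as univariate polynomials in `k`, viewed again as a polynomial in all the variables. -/
noncomputable def resWrt {σ R : Type*} [CommRing R] [DecidableEq σ] (k : σ)
    (f g : MvPolynomial σ R) : MvPolynomial σ R :=
  rename Subtype.val (resultant (toUnivar k f) (toUnivar k g))

/-!
The coefficients of `f` as a polynomial in `x_k` involve only the variables of `f` other than
`x_k`, and the resultant is a polynomial in the coefficients of `f` and `g`; so its variables lie
in `(vars f ∪ vars g) \ {x_k}`. If `x_k` does not occur in `f`, the resultant is a power of `f`,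
and its edges are edges of `f`. Otherwise every variable of the resultant is a neighbour of `x_k`
in `G` that precedes it in the ordering, and the perfect elimination property makes any two of
them adjacent.
-/

namespace MvPolynomial

variable {σ R : Type*} [CommSemiring R]

lemma some_mem_vars_of_mem_vars_coeff_optionEquivLeft {p : MvPolynomial (Option σ) R} {i : ℕ}
    {j : σ} (hj : j ∈ ((optionEquivLeft R σ p).coeff i).vars) : some j ∈ p.vars := by
  classical
  obtain ⟨d, hd, hjd⟩ := (mem_vars_iff_mem_support _).mp hj
  rw [mem_support_iff, optionEquivLeft_coeff_coeff] at hd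
  exact (mem_vars_iff_mem_support _).mpr
    ⟨_, mem_support_iff.mpr hd, by simpa using Finsupp.mem_support_iff.mp hjd⟩

lemma natDegree_optionEquivLeft_eq_zero {p : MvPolynomial (Option σ) R} (h : none ∉ p.vars) :
    (optionEquivLeft R σ p).natDegree = 0 := by
  classical
  refine Nat.eq_zero_of_le_zero <| Polynomial.natDegree_le_iff_coeff_eq_zero.mpr fun i hi => ?_
  ext d
  rw [optionEquivLeft_coeff_coeff, coeff_zero, ← notMem_support_iff]
  intro hd
  exact h ((mem_vars_iff_mem_support _).mpr ⟨_, hd, by simpa using hi.ne'⟩)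

lemma vars_rename_subset_of_mem_supported {τ : Type*} [DecidableEq τ] {f : σ → τ} {s : Set τ}
    {p : MvPolynomial σ R} (hp : p ∈ supported R (f ⁻¹' s)) : ↑(rename f p).vars ⊆ s := by
  intro x hx
  obtain ⟨j, hj, rfl⟩ := mem_vars_rename f p hx
  exact mem_supported.mp hp hj

end MvPolynomial

lemma resultant_C_left {S : Type*} [CommRing S] (a : S) (q : Polynomial S) :
    resultant (Polynomial.C a) q = a ^ q.natDegree := by
  have hdiag : sylvesterMatrix (Polynomial.C a) q = Matrix.diagonal fun _ => a := by
    ext i j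
    have hi : (i : ℕ) < q.natDegree := by simpa using i.isLt
    by_cases hij : i = j
    · subst hij
      simp [sylvesterMatrix, hi]
    · rw [Matrix.diagonal_apply_ne _ hij, sylvesterMatrix, Matrix.of_apply, if_pos hi]
      exact if_neg fun h => hij (Fin.ext (by have := Polynomial.natDegree_C a; omega))
  rw [resultant, hdiag, Matrix.det_diagonal, Finset.prod_const, Finset.card_univ, Fintype.card_fin,
    Polynomial.natDegree_C, add_zero]

lemma resultant_C_right {S : Type*} [CommRing S] (p : Polynomial S) (b : S) :
    resultant p (Polynomial.C b) = b ^ p.natDegree := by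
  have hdiag : sylvesterMatrix p (Polynomial.C b) = Matrix.diagonal fun _ => b := by
    ext i j
    by_cases hij : i = j
    · subst hij
      simp [sylvesterMatrix]
    · rw [Matrix.diagonal_apply_ne _ hij, sylvesterMatrix, Matrix.of_apply, if_neg (by simp)]
      exact if_neg fun h => hij (Fin.ext (by have := Polynomial.natDegree_C b; omega))
  rw [resultant, hdiag, Matrix.det_diagonal, Finset.prod_const, Finset.card_univ, Fintype.card_fin,
    Polynomial.natDegree_C, zero_add]

lemma resultant_mem_of_coeff_mem {S : Type*} [CommRing S] {A : Subring S} {p q : Polynomial S}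
    (hp : ∀ i, p.coeff i ∈ A) (hq : ∀ i, q.coeff i ∈ A) : resultant p q ∈ A := by
  rw [resultant, Matrix.det_apply]
  refine A.sum_mem fun σ _ => ?_
  rw [Units.smul_def, zsmul_eq_mul]
  refine A.mul_mem (intCast_mem A _) (A.prod_mem fun i _ => ?_)
  simp only [sylvesterMatrix, Matrix.of_apply]
  split_ifs <;> first | exact hp _ | exact hq _ | exact A.zero_mem

section toUnivar

variable {σ R : Type*} [DecidableEq σ] {k : σ}

lemma coeff_toUnivar_mem_supported [CommSemiring R] (f : MvPolynomial σ R) (i : ℕ) :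
    (toUnivar k f).coeff i ∈ supported R (Subtype.val ⁻¹' (f.vars : Set σ)) := by
  refine mem_supported.mpr fun j hj => ?_
  obtain ⟨x, hx, hxj⟩ :=
    mem_vars_rename _ f (some_mem_vars_of_mem_vars_coeff_optionEquivLeft hj)
  obtain rfl : x = j := by simpa using (Equiv.symm_apply_eq _).mp hxj
  exact hx

lemma natDegree_toUnivar_eq_zero [CommSemiring R] {f : MvPolynomial σ R} (hk : k ∉ f.vars) :
    (toUnivar k f).natDegree = 0 := by
  refine natDegree_optionEquivLeft_eq_zero fun h => hk ?_
  obtain ⟨x, hx, hxk⟩ := mem_vars_rename _ f h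
  obtain rfl : x = k := by simpa using (Equiv.symm_apply_eq _).mp hxk
  exact hx

variable [CommRing R]

lemma vars_resWrt_subset (f g : MvPolynomial σ R) :
    (resWrt k f g).vars ⊆ (f.vars ∪ g.vars).erase k := by
  intro x hx
  have hres : resultant (toUnivar k f) (toUnivar k g) ∈
      supported R (Subtype.val ⁻¹' ((f.vars ∪ g.vars : Finset σ) : Set σ)) := by
    refine resultant_mem_of_coeff_mem (A := (supported R _).toSubring)
      (fun i => supported_mono ?_ (coeff_toUnivar_mem_supported f i))
      (fun i => supported_mono ?_ (coeff_toUnivar_mem_supported g i)) <;> simp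
  obtain ⟨j, hj, rfl⟩ := mem_vars_rename _ _ hx
  exact Finset.mem_erase.mpr ⟨j.2, mem_supported.mp hres hj⟩

lemma vars_resWrt_subset_left {f : MvPolynomial σ R} (hk : k ∉ f.vars) (g : MvPolynomial σ R) :
    (resWrt k f g).vars ⊆ f.vars := by
  rw [resWrt, Polynomial.eq_C_of_natDegree_eq_zero (natDegree_toUnivar_eq_zero hk),
    resultant_C_left]
  exact Finset.coe_subset.mp
    (vars_rename_subset_of_mem_supported (pow_mem (coeff_toUnivar_mem_supported f 0) _))

lemma vars_resWrt_subset_right (f : MvPolynomial σ R) {g : MvPolynomial σ R} (hk : k ∉ g.vars) :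
    (resWrt k f g).vars ⊆ g.vars := by
  rw [resWrt, Polynomial.eq_C_of_natDegree_eq_zero (natDegree_toUnivar_eq_zero hk),
    resultant_C_right]
  exact Finset.coe_subset.mp
    (vars_rename_subset_of_mem_supported (pow_mem (coeff_toUnivar_mem_supported g 0) _))

end toUnivar

lemma assocGraph_singleton_le {σ R : Type*} [CommSemiring R] [DecidableEq σ]
    {F : Set (MvPolynomial σ R)} {p q : MvPolynomial σ R} (hq : q ∈ F) (h : p.vars ⊆ q.vars) :
    assocGraph {p} ≤ assocGraph F := by
  rintro i j ⟨hij, _, rfl, hi, hj⟩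
  exact ⟨hij, q, hq, h hi, h hj⟩

lemma IsPEO.adj {V : Type*} {G : SimpleGraph V} {lt : V → V → Prop} (h : IsPEO G lt)
    {i j k : V} (hij : i ≠ j) (hi : lt i k ∧ G.Adj i k) (hj : lt j k ∧ G.Adj j k) :
    G.Adj i j :=
  h k (Set.mem_insert_of_mem _ hi) (Set.mem_insert_of_mem _ hj) hij

/-- If `G` is a chordal structure of `{f, g}` having a perfect elimination
ordering in which `x_k` is `≥` every variable occurring in `f` or in `g`, then `G` is a chordal
structure of `{res(f, g, x_k)}`. -/
theorem chordalStructure_resultant {K : Type*} [Field K] {n : ℕ}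
    (f g : MvPolynomial (Fin n) K) (k : Fin n)
    (G : SimpleGraph (Fin n)) (hG : ChordalStructure G {f, g})
    (hord : ∃ lt : Fin n → Fin n → Prop, IsStrictTotalOrder (Fin n) lt ∧ IsPEO G lt ∧
      ∀ y ∈ f.vars ∪ g.vars, y = k ∨ lt y k) :
    ChordalStructure G {resWrt k f g} := by
  obtain ⟨hchord, hle⟩ := hG
  obtain ⟨lt, -, hpeo, hmax⟩ := hord
  refine ⟨hchord, ?_⟩
  have hf : f ∈ ({f, g} : Set (MvPolynomial (Fin n) K)) := Set.mem_insert f {g}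
  have hg : g ∈ ({f, g} : Set (MvPolynomial (Fin n) K)) := Set.mem_insert_of_mem f rfl
  by_cases hkf : k ∉ f.vars
  · exact (assocGraph_singleton_le hf (vars_resWrt_subset_left hkf g)).trans hle
  by_cases hkg : k ∉ g.vars
  · exact (assocGraph_singleton_le hg (vars_resWrt_subset_right f hkg)).trans hle
  rw [not_not] at hkf hkg
  have hnbr : ∀ x ∈ (resWrt k f g).vars, lt x k ∧ G.Adj x k := by
    intro x hx
    obtain ⟨hxk, hx⟩ := Finset.mem_erase.mp (vars_resWrt_subset f g hx)
    refine ⟨(hmax x hx).resolve_left hxk, hle ⟨hxk, ?_⟩⟩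
    rcases Finset.mem_union.mp hx with hx | hx
    exacts [⟨f, hf, hx, hkf⟩, ⟨g, hg, hx, hkg⟩]
  rintro i j ⟨hij, _, rfl, hi, hj⟩
  exact hpeo.adj hij (hnbr i hi) (hnbr j hj)
end

section
/- Let G be a finite simple graph on a linearly ordered vertex set whose ordering is a perfect elimination ordering. For a vertex v having at least one neighbor smaller than itself, let par(v) denote the largest neighbor of v that is smaller than v (the parent of v in the elimination tree). If s and t are adjacent vertices of G with s < t, then there exist vertices t = v_0 > v_1 > ⋯ > v_k = s with k ≥ 1 such that for each 0 ≤ j < k the vertex v_j has a neighbor smaller than itself and v_{j+1} = par(v_j); moreover, for each 0 ≤ j < k, the vertex v_j is adjacent to s. In other words, in the elimination tree there is a directed path from t to s. -/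
/-- Let `G` be a finite simple graph whose linear vertex ordering is a perfect
elimination ordering. If `s` and `t` are adjacent with `s < t`, then there is a directed path
`t = v 0 > v 1 > ⋯ > v k = s` (`k ≥ 1`) in the elimination tree: for each `j < k`, `v (j+1)`
is a neighbour of `v j` smaller than `v j` and is the largest such (i.e. `v (j+1) = par (v j)`,
so in particular `v j` has a neighbour smaller than itself); moreover each `v j` (`j < k`)
is adjacent to `s`. -/
theorem eliminationTree_path {V : Type*} [Fintype V] [LinearOrder V] (G : SimpleGraph V)
    (hpeo : IsPEO G (· < ·))
    (s t : V) (hadj : G.Adj s t) (hst : s < t) :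
    ∃ (k : ℕ) (v : ℕ → V), 1 ≤ k ∧ v 0 = t ∧ v k = s ∧
      (∀ j < k, v (j + 1) < v j) ∧
      (∀ j < k, G.Adj (v (j + 1)) (v j) ∧
        ∀ u : V, G.Adj u (v j) → u < v j → u ≤ v (j + 1)) ∧
      (∀ j < k, G.Adj (v j) s) := by
  classical
  induction t using WellFoundedLT.induction with
  | _ t ih =>
  set S : Finset V := Finset.univ.filter (fun u => G.Adj u t ∧ u < t) with hS
  have hsS : s ∈ S := by simp [hS, hadj, hst]
  have hne : S.Nonempty := ⟨s, hsS⟩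
  set p : V := S.max' hne with hp
  have hpS : p ∈ S := S.max'_mem hne
  have hpadj : G.Adj p t := (Finset.mem_filter.mp hpS).2.1
  have hpt : p < t := (Finset.mem_filter.mp hpS).2.2
  have hsp : s ≤ p := S.le_max' s hsS
  have hmax : ∀ u : V, G.Adj u t → u < t → u ≤ p := fun u h1 h2 =>
    S.le_max' u (by simp [hS, h1, h2])
  rcases eq_or_lt_of_le hsp with heq | hlt
  · -- p = s : single step path
    refine ⟨1, fun j => if j = 0 then t else s, le_refl 1, by simp, by simp, ?_, ?_, ?_⟩
    · intro j hj; interval_cases j; simpa using hst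
    · intro j hj; interval_cases j
      simp only [if_neg one_ne_zero, if_pos rfl]
      exact ⟨hadj, fun u h1 h2 => heq ▸ hmax u h1 h2⟩
    · intro j hj; interval_cases j
      simpa using hadj.symm
  · -- s < p : s and p are both smaller neighbours of t, hence adjacent
    have hspadj : G.Adj s p := by
      have hc := hpeo t
      have h1 : s ∈ insert t {u | u < t ∧ G.Adj u t} := Or.inr ⟨hst, hadj⟩
      have h2 : p ∈ insert t {u | u < t ∧ G.Adj u t} := Or.inr ⟨hpt, hpadj⟩
      exact hc h1 h2 (ne_of_lt hlt)
    obtain ⟨k, v, hk, hv0, hvk, hdec, hpar, hadjs⟩ := ih p hpt hspadj hlt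
    refine ⟨k + 1, fun j => if j = 0 then t else v (j - 1), le_add_self, by simp, ?_, ?_, ?_, ?_⟩
    · simp [hvk]
    · intro j hj
      match j with
      | 0 => simpa [hv0] using hpt
      | Nat.succ i =>
        simp only [Nat.succ_eq_add_one, if_neg (Nat.succ_ne_zero _), if_neg (Nat.succ_ne_zero _),
          Nat.add_sub_cancel]
        exact hdec i (by omega)
    · intro j hj
      match j with
      | 0 =>
        simp only [if_pos rfl, if_neg one_ne_zero]
        exact ⟨by simpa [hv0] using hpadj, fun u h1 h2 => by simpa [hv0] using hmax u h1 h2⟩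
      | Nat.succ i =>
        simp only [Nat.succ_eq_add_one, if_neg (Nat.succ_ne_zero _), if_neg (Nat.succ_ne_zero _),
          Nat.add_sub_cancel]
        exact hpar i (by omega)
    · intro j hj
      match j with
      | 0 => simpa using hadj.symm
      | Nat.succ i =>
        simp only [Nat.succ_eq_add_one, if_neg (Nat.succ_ne_zero _), Nat.add_sub_cancel]
        exact hadjs i (by omega)
end

section
/- Let m ≥ 1, d ≥ 1 and w ≥ 0 be integers, and set M = ⌊(m+1)²/2⌋. Define sequences of integers by N_0 = m, D_0 = d, and the recursion N_{r+1} = (w+1)·⌊(N_r + 1)²/2⌋ and D_{r+1} = 2·D_r². Then for every integer r ≥ 1 one has D_r = 2^{2^r − 1}·d^{2^r} and N_r ≤ (w+1)^{2^r − 1}·M^{2^{r−1}}. -/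
/-- With `m ≥ 1`, `d ≥ 1`, `w ≥ 0`, `M = ⌊(m+1)²/2⌋`, and the recursion
`N 0 = m`, `D 0 = d`, `N (r+1) = (w+1)·⌊(N r + 1)²/2⌋`, `D (r+1) = 2·(D r)²`, one has
`D r = 2^(2^r - 1)·d^(2^r)` and `N r ≤ (w+1)^(2^r - 1)·M^(2^(r-1))` for all `r ≥ 1`. -/
theorem md_property_growth (m d w M : ℤ) (hm : 1 ≤ m) (hd : 1 ≤ d) (hw : 0 ≤ w)
    (hM : M = (m + 1) ^ 2 / 2)
    (N D : ℕ → ℤ) (hN0 : N 0 = m) (hD0 : D 0 = d)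
    (hN : ∀ r : ℕ, N (r + 1) = (w + 1) * ((N r + 1) ^ 2 / 2))
    (hD : ∀ r : ℕ, D (r + 1) = 2 * (D r) ^ 2) :
    ∀ r : ℕ, 1 ≤ r →
      D r = 2 ^ (2 ^ r - 1) * d ^ (2 ^ r) ∧
      N r ≤ (w + 1) ^ (2 ^ r - 1) * M ^ (2 ^ (r - 1)) := by
  have hM2 : 2 ≤ M := by
    have : 4 ≤ (m + 1) ^ 2 := by nlinarith
    have := Int.ediv_le_ediv (by norm_num : (0:ℤ) < 2) this
    omega
  have hw1 : (1:ℤ) ≤ w + 1 := by linarith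
  -- N is always ≥ 1
  have hNpos : ∀ r, 1 ≤ N r := by
    intro r
    induction r with
    | zero => rw [hN0]; exact hm
    | succ r ih =>
      rw [hN r]
      have h4 : (4:ℤ) ≤ (N r + 1) ^ 2 := by nlinarith
      have h2 : (2:ℤ) ≤ (N r + 1) ^ 2 / 2 := by
        have := Int.ediv_le_ediv (by norm_num : (0:ℤ) < 2) h4
        omega
      nlinarith
  -- D closed form, for all r
  have hDval : ∀ r, D r = 2 ^ (2 ^ r - 1) * d ^ (2 ^ r) := by
    intro r
    induction r with
    | zero => simpa using hD0
    | succ r ih =>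
      rw [hD r, ih]
      have h1 : 2 ^ (r + 1) - 1 = (2 ^ r - 1) + (2 ^ r - 1) + 1 := by
        have : 1 ≤ 2 ^ r := Nat.one_le_two_pow
        omega
      have h2 : 2 ^ (r + 1) = 2 ^ r + 2 ^ r := by ring
      rw [h1, h2]
      ring
  -- N bound, for r ≥ 1
  have hNval : ∀ r : ℕ, 1 ≤ r → N r ≤ (w + 1) ^ (2 ^ r - 1) * M ^ (2 ^ (r - 1)) := by
    intro r hr
    induction r, hr using Nat.le_induction with
    | base =>
      rw [hN 0, hN0, ← hM]
      norm_num
    | succ r hr ih =>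
      set A : ℤ := (w + 1) ^ (2 ^ r - 1) * M ^ (2 ^ (r - 1)) with hA
      have hA2 : 2 ≤ A := by
        have h1 : (1:ℤ) ≤ (w + 1) ^ (2 ^ r - 1) := one_le_pow₀ hw1
        have h2 : (2:ℤ) ≤ M ^ (2 ^ (r - 1)) := by
          calc (2:ℤ) = 2 ^ 1 := by norm_num
          _ ≤ 2 ^ (2 ^ (r - 1)) := pow_le_pow_right₀ (by norm_num) Nat.one_le_two_pow
          _ ≤ M ^ (2 ^ (r - 1)) := pow_le_pow_left₀ (by norm_num) hM2 _
        nlinarith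
      have hNr := hNpos r
      have hsq : (N r + 1) ^ 2 ≤ (A + 1) ^ 2 := by nlinarith
      have hstep : (N r + 1) ^ 2 / 2 ≤ A ^ 2 := by
        have h1 : (N r + 1) ^ 2 / 2 ≤ (2 * A ^ 2 + 1) / 2 := by
          apply Int.ediv_le_ediv (by norm_num)
          nlinarith
        have h2 : (2 * A ^ 2 + 1) / 2 = A ^ 2 := by omega
        omega
      have hfin : N (r + 1) ≤ (w + 1) * A ^ 2 := by
        rw [hN r]
        have h0 : (0:ℤ) ≤ w + 1 := by linarith
        exact mul_le_mul_of_nonneg_left hstep h0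
      refine hfin.trans (le_of_eq ?_)
      rw [hA]
      have e1 : 2 ^ (r + 1) - 1 = (2 ^ r - 1) + (2 ^ r - 1) + 1 := by
        have : 1 ≤ 2 ^ r := Nat.one_le_two_pow
        omega
      have e2 : 2 ^ ((r + 1) - 1) = 2 ^ (r - 1) + 2 ^ (r - 1) := by
        have : r - 1 + 1 = r := by omega
        calc 2 ^ ((r + 1) - 1) = 2 ^ r := by norm_num
        _ = 2 ^ (r - 1 + 1) := by rw [this]
        _ = 2 ^ (r - 1) + 2 ^ (r - 1) := by ring
      rw [e1, e2]
      ring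
  exact fun r hr => ⟨hDval r, hNval r hr⟩
end
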